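/- arXiv:2202.13748 — 4 statements merged into one kernel-verified Lean document; each statement's English description precedes it below -/
import Mathlib

section
/- Let α₁, α₂, α₃ ∈ ℝ and define τ²(w) = α₁²(w₁−w₂)(w₃−w₁) + α₂²(w₂−w₃)(w₁−w₂) + α₃²(w₃−w₁)(w₂−w₃) for w = (w₁,w₂,w₃) ∈ ℝ³. Define the vector fields on ℝ³: X₁(w) = (1,1,1), X₂(w) = (w₁,w₂,w₃), and X₃(w) = (−(w₃w₂ − w₁(w₃+w₂) + τ²(w)), −(w₁w₃ − w₂(w₁+w₃) + τ²(w)), −(w₂w₁ − w₃(w₂+w₁) + τ²(w))). Then at every point of ℝ³ the Lie brackets satisfy [X₁,X₂] = X₁, [X₁,X₃] = 2X₂, and [X₂,X₃] = X₃; in particular X₁, X₂, X₃ span a Lie algebra of vector fields isomorphic to 𝔰𝔩₂ (the Vessiot–Guldberg Lie algebra of the generalised Darboux–Brioschi–Halphen system). -/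
/-- The pointwise Lie bracket of two vector fields on (an open subset of) ℝⁿ,
    `[V,W](p) = (DW)(p)(V(p)) − (DV)(p)(W(p))`. -/
noncomputable def vbracket {n : ℕ} (V W : (Fin n → ℝ) → (Fin n → ℝ)) :
    (Fin n → ℝ) → (Fin n → ℝ) :=
  fun p => fderiv ℝ W p (V p) - fderiv ℝ V p (W p)

/-- The function τ² of the generalised Darboux–Brioschi–Halphen system. -/
def tauSq (α₁ α₂ α₃ : ℝ) (w : Fin 3 → ℝ) : ℝ :=
  α₁ ^ 2 * (w 0 - w 1) * (w 2 - w 0) + α₂ ^ 2 * (w 1 - w 2) * (w 0 - w 1) +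
    α₃ ^ 2 * (w 2 - w 0) * (w 1 - w 2)

def dbhX₁ : (Fin 3 → ℝ) → (Fin 3 → ℝ) := fun _ => ![1, 1, 1]

def dbhX₂ : (Fin 3 → ℝ) → (Fin 3 → ℝ) := fun w => ![w 0, w 1, w 2]

def dbhX₃ (α₁ α₂ α₃ : ℝ) : (Fin 3 → ℝ) → (Fin 3 → ℝ) := fun w =>
  ![-(w 2 * w 1 - w 0 * (w 2 + w 1) + tauSq α₁ α₂ α₃ w),
    -(w 0 * w 2 - w 1 * (w 0 + w 2) + tauSq α₁ α₂ α₃ w),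
    -(w 1 * w 0 - w 2 * (w 1 + w 0) + tauSq α₁ α₂ α₃ w)]

/-!
`X₁` is the constant field `1 = (1,1,1)`, `X₂` is the identity (Euler) field, and `X₃` is a
homogeneous quadratic map. Along lines in direction `1` the form `τ²` is constant, and one checks
`X₃(w + t•1) = X₃(w) + t•2w + t²•1`; along rays `X₃` is homogeneous of degree two. Differentiating
these at `t = 0` gives `DX₃(p)1 = 2p` and, by Euler's identity, `DX₃(p)p = 2X₃(p)`. Since
`[1, W](p) = DW(p)1` and `[id, W](p) = DW(p)p − W(p)`, the three relations follow.
-/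

section LineDerivative

variable {E F : Type*} [NormedAddCommGroup E] [NormedSpace ℝ E]
  [NormedAddCommGroup F] [NormedSpace ℝ F]

theorem hasDerivAt_quadratic_curve_zero (a b c : F) :
    HasDerivAt (fun t : ℝ => a + t • b + t ^ 2 • c) b 0 := by
  convert (((hasDerivAt_id (0 : ℝ)).smul_const b).const_add a).add
    ((hasDerivAt_pow 2 (0 : ℝ)).smul_const c) using 1
  · rfl
  · simp

theorem fderiv_apply_eq_of_hasDerivAt_line {f : E → F} {p v : E} {y : F}
    (hf : DifferentiableAt ℝ f p) (h : HasDerivAt (fun t : ℝ => f (p + t • v)) y 0) :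
    fderiv ℝ f p v = y := by
  have hline : HasDerivAt (fun t : ℝ => p + t • v) v 0 := by
    simpa using ((hasDerivAt_id (0 : ℝ)).smul_const v).const_add p
  exact (hf.hasFDerivAt.comp_hasDerivAt_of_eq (0 : ℝ) hline (by simp)).unique h

theorem fderiv_apply_eq_of_quadratic_on_line {f : E → F} {p v : E} {b c : F}
    (hf : DifferentiableAt ℝ f p) (h : ∀ t : ℝ, f (p + t • v) = f p + t • b + t ^ 2 • c) :
    fderiv ℝ f p v = b :=
  fderiv_apply_eq_of_hasDerivAt_line hf <| by
    simpa only [h] using hasDerivAt_quadratic_curve_zero (f p) b c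

theorem fderiv_apply_self_of_homogeneous_two {f : E → F} {p : E}
    (hf : DifferentiableAt ℝ f p) (hom : ∀ (c : ℝ) (x : E), f (c • x) = c ^ 2 • f x) :
    fderiv ℝ f p p = (2 : ℝ) • f p :=
  fderiv_apply_eq_of_quadratic_on_line (c := f p) hf fun t => by
    rw [show p + t • p = (1 + t) • p by module, hom]
    module

end LineDerivative

section Bracket

variable {n : ℕ}

theorem vbracket_const_left (c : Fin n → ℝ) (W : (Fin n → ℝ) → (Fin n → ℝ))
    (p : Fin n → ℝ) : vbracket (fun _ => c) W p = fderiv ℝ W p c := by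
  simp [vbracket]

theorem vbracket_id_left (W : (Fin n → ℝ) → (Fin n → ℝ)) (p : Fin n → ℝ) :
    vbracket id W p = fderiv ℝ W p p - W p := by
  simp [vbracket]

end Bracket

theorem dbhX₁_eq_const : dbhX₁ = fun _ => 1 := by
  funext w i
  fin_cases i <;> rfl

theorem dbhX₂_eq_id : dbhX₂ = id := by
  funext w i
  fin_cases i <;> rfl

section FieldX₃

variable (α₁ α₂ α₃ : ℝ)

theorem differentiable_dbhX₃ : Differentiable ℝ (dbhX₃ α₁ α₂ α₃) := by
  refine differentiable_pi.2 fun i => ?_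
  fin_cases i <;> simp [dbhX₃, tauSq] <;> fun_prop

theorem dbhX₃_smul (c : ℝ) (w : Fin 3 → ℝ) :
    dbhX₃ α₁ α₂ α₃ (c • w) = c ^ 2 • dbhX₃ α₁ α₂ α₃ w := by
  funext i
  fin_cases i <;> simp [dbhX₃, tauSq] <;> ring

theorem dbhX₃_add_smul_one (w : Fin 3 → ℝ) (t : ℝ) :
    dbhX₃ α₁ α₂ α₃ (w + t • 1) = dbhX₃ α₁ α₂ α₃ w + t • (2 : ℝ) • w + t ^ 2 • 1 := by
  funext i
  fin_cases i <;> simp [dbhX₃, tauSq, Matrix.vecHead, Matrix.vecTail] <;> ring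

end FieldX₃

/-- The vector fields X₁, X₂, X₃ of the generalised Darboux–Brioschi–Halphen
system satisfy the 𝔰𝔩₂ commutation relations
[X₁,X₂] = X₁, [X₁,X₃] = 2X₂, [X₂,X₃] = X₃ at every point of ℝ³. -/
theorem dbh_sl2_commutation_relations (α₁ α₂ α₃ : ℝ) :
    ∀ p : Fin 3 → ℝ,
      vbracket dbhX₁ dbhX₂ p = dbhX₁ p ∧
      vbracket dbhX₁ (dbhX₃ α₁ α₂ α₃) p = (2 : ℝ) • dbhX₂ p ∧
      vbracket dbhX₂ (dbhX₃ α₁ α₂ α₃) p = dbhX₃ α₁ α₂ α₃ p := by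
  intro p
  have hX₃ := (differentiable_dbhX₃ α₁ α₂ α₃).differentiableAt (x := p)
  rw [dbhX₁_eq_const, dbhX₂_eq_id]
  refine ⟨?_, ?_, ?_⟩
  · rw [vbracket_const_left, fderiv_id]
    rfl
  · rw [vbracket_const_left]
    exact fderiv_apply_eq_of_quadratic_on_line hX₃ (dbhX₃_add_smul_one α₁ α₂ α₃ p)
  · rw [vbracket_id_left, fderiv_apply_self_of_homogeneous_two hX₃ (dbhX₃_smul α₁ α₂ α₃)]
    module
end

section
/- Define the following vector fields on ℝ⁵ with coordinates (x₁,…,x₅): X₁ = (1,0,0,0,0), X₂(x) = (0,1,x₁,x₁²,2x₁x₂), X₃(x) = (0,0,1,2x₁,2x₂), X₄ = (0,0,0,1,0), X₅ = (0,0,0,0,1). Then at every point of ℝ⁵ the Lie brackets satisfy [X₁,X₂] = X₃, [X₁,X₃] = 2X₄, [X₂,X₃] = 2X₅, and all the remaining brackets [Xᵢ,Xⱼ] for 1 ≤ i < j ≤ 5 vanish; in particular X₁,…,X₅ span a 5-dimensional nilpotent Lie algebra of vector fields (the Vessiot–Guldberg Lie algebra of the control system of Example 3.4). -/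
/-- The vector fields X₁,…,X₅ of the control system on ℝ⁵ (indexed by `Fin 5`). -/
def ctrlX : Fin 5 → (Fin 5 → ℝ) → (Fin 5 → ℝ) :=
  ![fun _ => ![1, 0, 0, 0, 0],
    fun x => ![0, 1, x 0, (x 0) ^ 2, 2 * x 0 * x 1],
    fun x => ![0, 0, 1, 2 * x 0, 2 * x 1],
    fun _ => ![0, 0, 0, 1, 0],
    fun _ => ![0, 0, 0, 0, 1]]

/-!
The fields are polynomial, so each has an explicit derivative `ctrlXDeriv i p` (zero for the
constant fields X₁, X₄, X₅), and every bracket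
`[Xᵢ,Xⱼ](p) = DXⱼ(p) Xᵢ(p) − DXᵢ(p) Xⱼ(p)` becomes a componentwise polynomial identity.
-/

open ContinuousLinearMap

theorem vbracket_apply_of_hasFDerivAt {n : ℕ} {V W : (Fin n → ℝ) → (Fin n → ℝ)}
    {V' W' : (Fin n → ℝ) →L[ℝ] (Fin n → ℝ)} {p : Fin n → ℝ}
    (hV : HasFDerivAt V V' p) (hW : HasFDerivAt W W' p) :
    vbracket V W p = W' (V p) - V' (W p) := by
  rw [vbracket, hV.fderiv, hW.fderiv]

noncomputable def ctrlXDeriv : Fin 5 → (Fin 5 → ℝ) → (Fin 5 → ℝ) →L[ℝ] (Fin 5 → ℝ) :=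
  ![fun _ => 0,
    fun x => pi ![0, 0, proj 0, (2 * x 0) • proj 0, (2 * x 1) • proj 0 + (2 * x 0) • proj 1],
    fun _ => pi ![0, 0, 0, (2 : ℝ) • proj 0, (2 : ℝ) • proj 1],
    fun _ => 0,
    fun _ => 0]

theorem hasFDerivAt_ctrlX (i : Fin 5) (p : Fin 5 → ℝ) :
    HasFDerivAt (ctrlX i) (ctrlXDeriv i p) p := by
  have h0 : HasFDerivAt (fun x : Fin 5 → ℝ => x 0) (proj 0 : (Fin 5 → ℝ) →L[ℝ] ℝ) p :=
    hasFDerivAt_apply 0 p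
  have h1 : HasFDerivAt (fun x : Fin 5 → ℝ => x 1) (proj 1 : (Fin 5 → ℝ) →L[ℝ] ℝ) p :=
    hasFDerivAt_apply 1 p
  fin_cases i
  · exact hasFDerivAt_const _ p
  · refine hasFDerivAt_pi.2 fun k => ?_
    fin_cases k
    · exact hasFDerivAt_const _ p
    · exact hasFDerivAt_const _ p
    · exact h0
    · exact (h0.pow 2).congr_fderiv (by simp)
    · refine ((h0.const_mul 2).fun_mul h1).congr_fderiv ?_
      ext v
      simp only [Fin.reduceFinMk, Matrix.cons_val, add_apply, smul_apply, proj_apply, smul_eq_mul]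
      ring
  · refine hasFDerivAt_pi.2 fun k => ?_
    fin_cases k
    · exact hasFDerivAt_const _ p
    · exact hasFDerivAt_const _ p
    · exact hasFDerivAt_const _ p
    · exact h0.const_mul 2
    · exact h1.const_mul 2
  · exact hasFDerivAt_const _ p
  · exact hasFDerivAt_const _ p

theorem vbracket_ctrlX (i j : Fin 5) (p : Fin 5 → ℝ) :
    vbracket (ctrlX i) (ctrlX j) p = ctrlXDeriv j p (ctrlX i p) - ctrlXDeriv i p (ctrlX j p) :=
  vbracket_apply_of_hasFDerivAt (hasFDerivAt_ctrlX i p) (hasFDerivAt_ctrlX j p)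

/-- The control-system vector fields satisfy [X₁,X₂] = X₃, [X₁,X₃] = 2X₄,
[X₂,X₃] = 2X₅ and all remaining brackets [Xᵢ,Xⱼ] (i < j) vanish, at every
point of ℝ⁵: they span a 5-dimensional nilpotent Lie algebra. -/
theorem control_system_nilpotent_commutation_relations :
    ∀ p : Fin 5 → ℝ,
      vbracket (ctrlX 0) (ctrlX 1) p = ctrlX 2 p ∧
      vbracket (ctrlX 0) (ctrlX 2) p = (2 : ℝ) • ctrlX 3 p ∧
      vbracket (ctrlX 1) (ctrlX 2) p = (2 : ℝ) • ctrlX 4 p ∧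
      (∀ i j : Fin 5, i < j →
        (i, j) ≠ ((0 : Fin 5), (1 : Fin 5)) →
        (i, j) ≠ ((0 : Fin 5), (2 : Fin 5)) →
        (i, j) ≠ ((1 : Fin 5), (2 : Fin 5)) →
        vbracket (ctrlX i) (ctrlX j) p = 0) := by
  intro p
  simp only [vbracket_ctrlX]
  refine ⟨?_, ?_, ?_, fun i j hij h01 h02 h12 => ?_⟩
  · ext k; fin_cases k <;> simp [ctrlX, ctrlXDeriv]
  · ext k; fin_cases k <;> simp [ctrlX, ctrlXDeriv]
  · ext k; fin_cases k <;> simp [ctrlX, ctrlXDeriv]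
  · fin_cases i <;> fin_cases j <;>
      first
        | (exfalso; revert hij h01 h02 h12; decide)
        | (ext k; fin_cases k <;> simp [ctrlX, ctrlXDeriv])
end

section
/- For all c₁, c₂ ∈ ℝ, the curves x̄(t) = (2c₂ − 1)(1 + cosh(t + 2c₁)) + sinh(t + 2c₁) and ā(t) = (1 − e^{2c₁ + t})/(e^{2c₁ + t} + 1) are differentiable on ℝ and satisfy, for every t ∈ ℝ, the reduced Schwarz system dx̄/dt = 1 − x̄(t)ā(t) and dā/dt = (ā(t)² − 1)/2; moreover |ā(t)| < 1 for all t. -/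
/-!
The system is autonomous, so it suffices to treat `c₁ = 0` and translate time by `2 c₁`.
With `E = exp s`, the `ā`-curve `(1 - E) / (E + 1)` equals `-tanh (s / 2)`: it satisfies the
Riccati equation `ā' = (ā² - 1) / 2` and stays in `(-1, 1)`. The `x̄`-equation is then an
identity between rational functions of `E`, since `cosh` and `sinh` are too.
-/

open Real

noncomputable def schwarzA (s : ℝ) : ℝ := (1 - exp s) / (exp s + 1)

noncomputable def schwarzX (k s : ℝ) : ℝ := k * (1 + cosh s) + sinh s

lemma abs_schwarzA_lt_one (s : ℝ) : |schwarzA s| < 1 := by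
  have hE : 0 < exp s := exp_pos s
  rw [schwarzA, abs_div, abs_of_pos (by linarith : 0 < exp s + 1), div_lt_one (by linarith),
    abs_lt]
  constructor <;> linarith

lemma hasDerivAt_schwarzA (s : ℝ) : HasDerivAt schwarzA ((schwarzA s ^ 2 - 1) / 2) s := by
  have hden : exp s + 1 ≠ 0 := by positivity
  refine (((hasDerivAt_exp s).const_sub 1).div ((hasDerivAt_exp s).add_const 1) hden).congr_deriv ?_
  rw [schwarzA]
  field_simp
  ring

lemma hasDerivAt_schwarzX (k s : ℝ) :
    HasDerivAt (schwarzX k) (1 - schwarzX k s * schwarzA s) s := by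
  refine ((((hasDerivAt_cosh s).const_add 1).const_mul k).add (hasDerivAt_sinh s)).congr_deriv ?_
  rw [schwarzX, schwarzA, cosh_eq, sinh_eq, exp_neg]
  field_simp
  ring

/-- For all c₁, c₂ ∈ ℝ, the curves
x̄(t) = (2c₂ − 1)(1 + cosh(t + 2c₁)) + sinh(t + 2c₁) and
ā(t) = (1 − e^{2c₁+t})/(e^{2c₁+t} + 1)
are differentiable and solve the reduced Schwarz system
dx̄/dt = 1 − x̄ā, dā/dt = (ā² − 1)/2, with |ā(t)| < 1 for all t. -/
theorem schwarz_reduced_solutions_inside (c₁ c₂ : ℝ) :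
    let xbar : ℝ → ℝ := fun t =>
      (2 * c₂ - 1) * (1 + Real.cosh (t + 2 * c₁)) + Real.sinh (t + 2 * c₁)
    let abar : ℝ → ℝ := fun t =>
      (1 - Real.exp (2 * c₁ + t)) / (Real.exp (2 * c₁ + t) + 1)
    ∀ t : ℝ,
      HasDerivAt xbar (1 - xbar t * abar t) t ∧
      HasDerivAt abar ((abar t ^ 2 - 1) / 2) t ∧
      |abar t| < 1 := by
  intro _ _ t
  have hx := (hasDerivAt_schwarzX (2 * c₂ - 1) (t + 2 * c₁)).comp_add_const t (2 * c₁)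
  rw [show schwarzA (t + 2 * c₁) = schwarzA (2 * c₁ + t) by rw [add_comm]] at hx
  exact ⟨hx, (hasDerivAt_schwarzA (2 * c₁ + t)).comp_const_add (2 * c₁) t,
    abs_schwarzA_lt_one (2 * c₁ + t)⟩
end

section
/- For all c₁, c₂ ∈ ℝ and all t ∈ ℝ with t ≠ −2c₁, the curves x̄(t) = −1 − 2c₂ + c₂ e^{t + 2c₁} + (1 + c₂) e^{−t − 2c₁} and ā(t) = (1 + e^{2c₁ + t})/(1 − e^{2c₁ + t}) satisfy the reduced Schwarz system dx̄/dt = 1 − x̄(t)ā(t) and dā/dt = (ā(t)² − 1)/2; moreover |ā(t)| > 1 for all such t. -/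
/-!
The reduced Schwarz system is autonomous, so after the shift `τ = t + 2c₁` it suffices to treat
`c₁ = 0`. With `u = exp τ`, the curve `ā = (1 + u)/(1 - u)` has derivative `2u/(1 - u)²`, which is
`(ā² - 1)/2`; the equation for `x̄` is then a rational identity in `u`. Finally `|1 - u| < 1 + u`
for `u > 0`, so `|ā| > 1`.
-/

open Real

namespace ReducedSchwarz

noncomputable def abar (τ : ℝ) : ℝ := (1 + exp τ) / (1 - exp τ)

noncomputable def xbar (c τ : ℝ) : ℝ := -1 - 2 * c + c * exp τ + (1 + c) * exp (-τ)

lemma exp_ne_one {τ : ℝ} (hτ : τ ≠ 0) : exp τ ≠ 1 := by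
  rwa [Ne, exp_eq_one_iff]

lemma one_sub_exp_ne_zero {τ : ℝ} (hτ : τ ≠ 0) : 1 - exp τ ≠ 0 :=
  sub_ne_zero.mpr (exp_ne_one hτ).symm

lemma one_lt_abs_one_add_div_one_sub {u : ℝ} (hu : 0 < u) (hu1 : u ≠ 1) :
    1 < |(1 + u) / (1 - u)| := by
  have hden : 0 < |1 - u| := abs_pos.mpr (sub_ne_zero.mpr hu1.symm)
  rw [abs_div, one_lt_div hden, abs_of_pos (by linarith : 0 < 1 + u)]
  exact abs_sub_lt_iff.mpr ⟨by linarith, by linarith⟩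

lemma one_lt_abs_abar {τ : ℝ} (hτ : τ ≠ 0) : 1 < |abar τ| :=
  one_lt_abs_one_add_div_one_sub (exp_pos τ) (exp_ne_one hτ)

lemma hasDerivAt_abar {τ : ℝ} (hτ : τ ≠ 0) : HasDerivAt abar ((abar τ ^ 2 - 1) / 2) τ := by
  have hden := one_sub_exp_ne_zero hτ
  refine (((hasDerivAt_exp τ).const_add 1).div ((hasDerivAt_exp τ).const_sub 1) hden).congr_deriv
    ?_
  simp only [abar]
  field_simp
  ring

lemma hasDerivAt_xbar (c : ℝ) {τ : ℝ} (hτ : τ ≠ 0) :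
    HasDerivAt (xbar c) (1 - xbar c τ * abar τ) τ := by
  have hden := one_sub_exp_ne_zero hτ
  have hneg : HasDerivAt (fun s => exp (-s)) (-exp (-τ)) τ := by
    simpa using (hasDerivAt_neg τ).exp
  refine ((((hasDerivAt_exp τ).const_mul c).const_add (-1 - 2 * c)).add
    (hneg.const_mul (1 + c))).congr_deriv ?_
  simp only [xbar, abar, exp_neg]
  field_simp
  ring

end ReducedSchwarz

/-- For all c₁, c₂ ∈ ℝ and all t ≠ −2c₁, the curves
x̄(t) = −1 − 2c₂ + c₂ e^{t+2c₁} + (1 + c₂) e^{−t−2c₁} and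
ā(t) = (1 + e^{2c₁+t})/(1 − e^{2c₁+t})
solve the reduced Schwarz system dx̄/dt = 1 − x̄ā, dā/dt = (ā² − 1)/2,
with |ā(t)| > 1 for all such t. -/
theorem schwarz_reduced_solutions_outside (c₁ c₂ : ℝ) :
    let xbar : ℝ → ℝ := fun t =>
      -1 - 2 * c₂ + c₂ * Real.exp (t + 2 * c₁) + (1 + c₂) * Real.exp (-t - 2 * c₁)
    let abar : ℝ → ℝ := fun t =>
      (1 + Real.exp (2 * c₁ + t)) / (1 - Real.exp (2 * c₁ + t))
    ∀ t : ℝ, t ≠ -2 * c₁ →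
      HasDerivAt xbar (1 - xbar t * abar t) t ∧
      HasDerivAt abar ((abar t ^ 2 - 1) / 2) t ∧
      |abar t| > 1 := by
  intro x a t ht
  have hτ : t + 2 * c₁ ≠ 0 := fun h => ht (by linarith)
  have hx : x = fun s => ReducedSchwarz.xbar c₂ (s + 2 * c₁) := by
    funext s
    simp only [x, ReducedSchwarz.xbar, neg_add']
  have ha : a = fun s => ReducedSchwarz.abar (s + 2 * c₁) := by
    funext s
    simp only [a, ReducedSchwarz.abar, add_comm]
  rw [hx, ha]
  exact ⟨(ReducedSchwarz.hasDerivAt_xbar c₂ hτ).comp_add_const t (2 * c₁),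
    (ReducedSchwarz.hasDerivAt_abar hτ).comp_add_const t (2 * c₁),
    ReducedSchwarz.one_lt_abs_abar hτ⟩
end
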